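/- In the abelian category of functors FinSet* → A (A an abelian category), the full subcategory of polynomial functors of degree ≤ n is closed under subobjects, quotient objects, and extensions. -/

import Mathlib

open CategoryTheory Limits

universe v u

/-- Skeleton of the category `FinSet*` of pointed finite sets: the object `⟨m⟩`
represents `{*} ⊔ Fin m`, and morphisms are pointed maps, encoded as partially
defined maps (`none` = basepoint). -/
structure PtdFin : Type where
  n : ℕ

instance : Category.{0} PtdFin where
  Hom X Y := Fin X.n → Option (Fin Y.n)
  id X := some
  comp f g := fun i => (f i).bind g
  id_comp f := rfl
  comp_id f := by
    funext i; show (f i).bind some = f i; cases f i <;> rfl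
  assoc f g h := by
    funext i
    show ((f i).bind g).bind h = (f i).bind fun j => (g j).bind h
    cases f i <;> rfl

/-- The pointed map `ψ_{I∖{i},I} : {*} ⊔ I → {*} ⊔ (I∖{i})`, the identity away
from `i` and collapsing `i` to the basepoint. -/
def psiDel {m : ℕ} (i : Fin (m + 1)) : (⟨m + 1⟩ : PtdFin) ⟶ ⟨m⟩ :=
  ⇑(finSuccEquiv' i)

/-- `G : FinSet* → A` is polynomial of degree `≤ n`:
`∩_{i ∈ I} ker G(ψ_{I∖{i},I}) = 0` for every finite set `I` with `|I| > n`. -/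
noncomputable def IsPolyDegLE {A : Type u} [Category.{v} A] [Abelian A]
    (n : ℕ) (G : PtdFin ⥤ A) : Prop :=
  ∀ m : ℕ, n < m + 1 →
    (Finset.univ.inf fun i : Fin (m + 1) =>
      kernelSubobject (G.map (psiDel i))) = ⊥

/-! The maps `δᵢ = ψ_{I∖{i},I} ≫ ιᵢ : {*} ⊔ I → {*} ⊔ I` collapsing `i` to the basepoint are
commuting idempotents, so `P = ∏ᵢ (1 - G(δᵢ))`, the projection onto the top cross-effect, is an
idempotent endomorphism of `G({*} ⊔ I)`, natural in `G`. It kills every `G(ψ_{I∖{i},I})` and fixes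
their common kernel, so `G` has degree `≤ n` iff `P` vanishes whenever `|I| > n`. Vanishing of a
component of a natural transformation passes to subobjects and quotients by naturality, and to
extensions because an idempotent on the middle of a short exact sequence that vanishes on both
ends factors through the left end, whence `P = P² = 0`. -/

theorem Finset.isIdempotentElem_noncommProd {ι M : Type*} [Monoid M] (s : Finset ι)
    (f : ι → M) (comm) (hf : ∀ i ∈ s, IsIdempotentElem (f i)) :
    IsIdempotentElem (s.noncommProd f comm) := by
  rw [IsIdempotentElem, ← Finset.noncommProd_mul_distrib f f comm comm comm]
  exact Finset.noncommProd_congr rfl hf _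

theorem CategoryTheory.ShortComplex.Exact.τ₂_eq_zero_of_idempotent
    {C : Type*} [Category C] [Preadditive C] [Balanced C] {S : ShortComplex C}
    (hS : S.Exact) [Mono S.f] (φ : S ⟶ S) (h₁ : φ.τ₁ = 0) (h₃ : φ.τ₃ = 0)
    (h₂ : φ.τ₂ ≫ φ.τ₂ = φ.τ₂) : φ.τ₂ = 0 := by
  obtain ⟨k, hk⟩ := hS.lift' φ.τ₂ (by rw [φ.comm₂₃, h₃, comp_zero])
  calc φ.τ₂ = k ≫ S.f ≫ φ.τ₂ := by rw [← Category.assoc, hk, h₂]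
    _ = 0 := by rw [← φ.comm₁₂, h₁, zero_comp, comp_zero]

namespace PtdFin

section Collapse

variable {m : ℕ}

def inclDel (i : Fin (m + 1)) : (⟨m⟩ : PtdFin) ⟶ ⟨m + 1⟩ :=
  fun j => some ((finSuccEquiv' i).symm (some j))

theorem inclDel_comp_psiDel (i : Fin (m + 1)) : inclDel i ≫ psiDel i = 𝟙 _ := by
  funext j
  show psiDel i ((finSuccEquiv' i).symm (some j)) = some j
  simp [psiDel]

def collapse (i : Fin (m + 1)) : End (⟨m + 1⟩ : PtdFin) :=
  psiDel i ≫ inclDel i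

theorem collapse_apply (i j : Fin (m + 1)) :
    collapse i j = if j = i then none else some j := by
  show (finSuccEquiv' i j).bind (fun k => some ((finSuccEquiv' i).symm (some k))) = _
  split_ifs with h
  · simp [h, finSuccEquiv'_at]
  · obtain ⟨k, hk⟩ := Option.ne_none_iff_exists'.1 (mt finSuccEquiv'_eq_none.1 (Ne.symm h))
    rw [hk, Option.bind_some, (finSuccEquiv' i).symm_apply_eq.2 hk.symm]

theorem collapse_comp_psiDel (i : Fin (m + 1)) : collapse i ≫ psiDel i = psiDel i := by
  rw [collapse, Category.assoc, inclDel_comp_psiDel, Category.comp_id]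

theorem isIdempotentElem_collapse (i : Fin (m + 1)) : IsIdempotentElem (collapse i) := by
  rw [IsIdempotentElem, End.mul_def, collapse, ← Category.assoc, Category.assoc (psiDel i),
    inclDel_comp_psiDel, Category.comp_id]

theorem commute_collapse (i j : Fin (m + 1)) : Commute (collapse i) (collapse j) := by
  funext k
  show (collapse j k).bind (collapse i) = (collapse i k).bind (collapse j)
  by_cases hi : k = i <;> by_cases hj : k = j <;> simp_all [collapse_apply]

end Collapse

section CrossEffect

variable {A : Type u} [Category.{v} A] [Abelian A] {m : ℕ}

noncomputable def crossEffectFactor (i : Fin (m + 1)) :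
    End ((evaluation PtdFin A).obj ⟨m + 1⟩) :=
  1 - (evaluation PtdFin A).mapEnd _ (collapse i)

theorem crossEffectFactor_app (i : Fin (m + 1)) (G : PtdFin ⥤ A) :
    (crossEffectFactor i).app G = 𝟙 _ - G.map (collapse i) := rfl

theorem crossEffectFactor_app_comp_map_psiDel (i : Fin (m + 1)) (G : PtdFin ⥤ A) :
    (crossEffectFactor i).app G ≫ G.map (psiDel i) = 0 := by
  rw [crossEffectFactor_app, Preadditive.sub_comp, ← G.map_comp, collapse_comp_psiDel]
  exact sub_eq_zero.2 (Category.id_comp _)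

theorem pairwise_commute_crossEffectFactor :
    Pairwise (Function.onFun Commute (crossEffectFactor (A := A) (m := m))) := fun i j _ =>
  have h := (commute_collapse i j).map ((evaluation PtdFin A).mapEnd _)
  (Commute.one_left _).sub_left ((Commute.one_right _).sub_right h)

theorem isIdempotentElem_crossEffectFactor (i : Fin (m + 1)) :
    IsIdempotentElem (crossEffectFactor (A := A) i) :=
  ((isIdempotentElem_collapse i).map ((evaluation PtdFin A).mapEnd _)).one_sub

variable (A m) in
noncomputable def crossEffectProj : End ((evaluation PtdFin A).obj ⟨m + 1⟩) :=
  Finset.univ.noncommProd crossEffectFactor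
    (Pairwise.set_pairwise pairwise_commute_crossEffectFactor _)

theorem crossEffectProj_app_comp_self (G : PtdFin ⥤ A) :
    (crossEffectProj A m).app G ≫ (crossEffectProj A m).app G = (crossEffectProj A m).app G :=
  NatTrans.congr_app (Finset.isIdempotentElem_noncommProd _ _ _
    fun i _ => isIdempotentElem_crossEffectFactor i :
      IsIdempotentElem (crossEffectProj A m)).eq G

theorem crossEffectProj_naturality {G H : PtdFin ⥤ A} (f : G ⟶ H) :
    f.app _ ≫ (crossEffectProj A m).app H = (crossEffectProj A m).app G ≫ f.app _ :=
  (crossEffectProj A m).naturality f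

theorem crossEffectProj_app_comp_map_psiDel (G : PtdFin ⥤ A) (i : Fin (m + 1)) :
    (crossEffectProj A m).app G ≫ G.map (psiDel i) = 0 := by
  classical
  obtain ⟨e, he⟩ : ∃ e, crossEffectProj A m = crossEffectFactor i * e :=
    ⟨_, (Finset.mul_noncommProd_erase _ (Finset.mem_univ i) _ _).symm⟩
  rw [he, End.mul_def, NatTrans.comp_app, Category.assoc,
    crossEffectFactor_app_comp_map_psiDel, comp_zero]

theorem comp_crossEffectProj_app_of_comp_map_psiDel {G : PtdFin ⥤ A} {Y : A}
    (k : Y ⟶ G.obj ⟨m + 1⟩) (hk : ∀ i, k ≫ G.map (psiDel i) = 0) :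
    k ≫ (crossEffectProj A m).app G = k := by
  refine Finset.noncommProd_induction _ _ _
    (fun e : End ((evaluation PtdFin A).obj ⟨m + 1⟩) => k ≫ e.app G = k)
    (fun e e' he he' => ?_) (Category.comp_id k) fun i _ => ?_
  · rw [End.mul_def, NatTrans.comp_app, ← Category.assoc, he', he]
  · rw [crossEffectFactor_app, Preadditive.comp_sub, Category.comp_id, collapse, G.map_comp,
      reassoc_of% hk i, zero_comp, sub_zero]

theorem factors_inf_kernelSubobject_iff (G : PtdFin ⥤ A) {Y : A} (k : Y ⟶ G.obj ⟨m + 1⟩) :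
    (Finset.univ.inf fun i => kernelSubobject (G.map (psiDel i))).Factors k ↔
      ∀ i, k ≫ G.map (psiDel i) = 0 := by
  simp only [Subobject.finset_inf_factors, kernelSubobject_factors_iff, Finset.mem_univ,
    true_implies]

theorem inf_kernelSubobject_eq_bot_iff (G : PtdFin ⥤ A) :
    (Finset.univ.inf fun i : Fin (m + 1) => kernelSubobject (G.map (psiDel i))) = ⊥ ↔
      (crossEffectProj A m).app G = 0 := by
  set K := Finset.univ.inf fun i => kernelSubobject (G.map (psiDel i))
  constructor
  · intro hK
    rw [← Subobject.bot_factors_iff_zero, ← hK, factors_inf_kernelSubobject_iff]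
    exact crossEffectProj_app_comp_map_psiDel G
  · intro hP
    have hK := (factors_inf_kernelSubobject_iff G K.arrow).1 (Subobject.factors_self K)
    rw [← Subobject.mk_arrow K, Subobject.mk_eq_bot_iff_zero,
      ← comp_crossEffectProj_app_of_comp_map_psiDel K.arrow hK, hP, comp_zero]

theorem isPolyDegLE_iff (n : ℕ) (G : PtdFin ⥤ A) :
    IsPolyDegLE n G ↔ ∀ m, n < m + 1 → (crossEffectProj A m).app G = 0 :=
  forall_congr' fun _ => imp_congr_right fun _ => inf_kernelSubobject_eq_bot_iff G

end CrossEffect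

end PtdFin

open PtdFin

/-- In the abelian category of functors `FinSet* → A`, the full subcategory of
polynomial functors of degree `≤ n` is closed under subobjects, quotient objects,
and extensions. -/
theorem polynomial_functors_closed_under_sub_quot_ext
    {A : Type u} [Category.{v} A] [Abelian A] (n : ℕ) :
    (∀ (G H : PtdFin ⥤ A) (f : H ⟶ G), Mono f → IsPolyDegLE n G → IsPolyDegLE n H) ∧
    (∀ (G H : PtdFin ⥤ A) (f : G ⟶ H), Epi f → IsPolyDegLE n G → IsPolyDegLE n H) ∧
    (∀ S : ShortComplex (PtdFin ⥤ A), S.ShortExact →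
      IsPolyDegLE n S.X₁ → IsPolyDegLE n S.X₃ → IsPolyDegLE n S.X₂) := by
  simp only [isPolyDegLE_iff]
  refine ⟨fun G H f _ hG m hm => ?_, fun G H f _ hG m hm => ?_, fun S hS h₁ h₃ m hm => ?_⟩
  · rw [← cancel_mono (f.app _), ← crossEffectProj_naturality]
    simp [hG m hm]
  · rw [← cancel_epi (f.app _), crossEffectProj_naturality]
    simp [hG m hm]
  · have hS' := hS.map_of_exact ((evaluation PtdFin A).obj ⟨m + 1⟩)
    have := hS'.mono_f
    exact hS'.exact.τ₂_eq_zero_of_idempotent (S.mapNatTrans (crossEffectProj A m))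
      (h₁ m hm) (h₃ m hm) (crossEffectProj_app_comp_self S.X₂)
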